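/- arXiv:1403.5955 — 3 statements merged into one kernel-verified Lean document; each statement's English description precedes it below -/
import Mathlib

section
/- If h ∈ AA(X), then the function Rh defined by (Rh)(t) := ∫_{−∞}^{t} T(t−s) h(s) ds belongs to AA(Y). -/
open Filter Topology MeasureTheory

/-- Almost automorphic functions. -/
def AlmostAutomorphic {Z : Type*} [NormedAddCommGroup Z] (f : ℝ → Z) : Prop :=
  Continuous f ∧
    ∀ s' : ℕ → ℝ, ∃ (k : ℕ → ℕ) (g : ℝ → Z), StrictMono k ∧
      (∀ t : ℝ, Tendsto (fun n => f (t + s' (k n))) atTop (𝓝 (g t))) ∧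
      (∀ t : ℝ, Tendsto (fun n => g (t - s' (k n))) atTop (𝓝 (f t)))

/-- Almost automorphic functions are bounded. -/
lemma AlmostAutomorphic.bounded {Z : Type*} [NormedAddCommGroup Z] {f : ℝ → Z}
    (hf : AlmostAutomorphic f) : ∃ C : ℝ, 0 ≤ C ∧ ∀ t, ‖f t‖ ≤ C := by
  by_contra hC
  push_neg at hC
  have H : ∀ n : ℕ, ∃ t : ℝ, (n : ℝ) < ‖f t‖ := fun n => (hC n (Nat.cast_nonneg n)).imp
    (fun t ht => ht)
  choose s' hs' using H
  obtain ⟨k, g, hk, hg1, _⟩ := hf.2 s'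
  have h0 := (hg1 0).norm
  obtain ⟨n₀, hn₀⟩ := exists_nat_gt (‖g 0‖ + 1)
  obtain ⟨n, hn1, hn2⟩ := ((h0.eventually (eventually_le_nhds (lt_add_one ‖g 0‖))).and
    (eventually_ge_atTop n₀)).exists
  rw [zero_add] at hn1
  have c1 : (n₀ : ℝ) ≤ (n : ℝ) := Nat.cast_le.2 hn2
  have c2 : (n : ℝ) ≤ (k n : ℝ) := Nat.cast_le.2 hk.le_apply
  have c3 : (k n : ℝ) < ‖f (s' (k n))‖ := hs' (k n)
  linarith

/-- If `h ∈ AA(X)`, then `(Rh)(t) = ∫_{-∞}^t T(t-s) h(s) ds` belongs to `AA(Y)`. -/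
theorem convolution_almostAutomorphic {X Y : Type*}
    [NormedAddCommGroup X] [NormedSpace ℂ X] [CompleteSpace X]
    [NormedAddCommGroup Y] [NormedSpace ℂ Y] [CompleteSpace Y]
    (β M δ : ℝ) (hβ : β ∈ Set.Ioo (0 : ℝ) 1) (hM : 0 < M) (hδ : 0 < δ)
    (T : ℝ → X →L[ℂ] Y)
    (hTcont : ∀ x : X, ContinuousOn (fun τ => T τ x) (Set.Ioi (0 : ℝ)))
    (hTnorm : ∀ τ > (0 : ℝ), ∀ x : X,
      ‖T τ x‖ ≤ M * τ ^ (-β) * Real.exp (-(δ / 2) * τ) * ‖x‖)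
    (h : ℝ → X) (hh : AlmostAutomorphic h) :
    AlmostAutomorphic (fun t => ∫ s in Set.Iic t, T (t - s) (h s)) := by
  obtain ⟨hβ0, hβ1⟩ := hβ
  obtain ⟨C, hC0, hC⟩ := hh.bounded
  set φ : ℝ → ℝ := fun τ => M * τ ^ (-β) * Real.exp (-(δ / 2) * τ) * C with hφdef
  -- integrability of the dominating function
  have hφint : IntegrableOn φ (Set.Ioi (0:ℝ)) := by
    have base := integrableOn_rpow_mul_exp_neg_mul_rpow (p := 1) (s := -β) (b := δ/2)
      (by linarith) zero_lt_one (by linarith)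
    have base' : IntegrableOn
        (fun x : ℝ => M * (x ^ (-β) * Real.exp (-(δ/2) * x ^ (1:ℝ))) * C) (Set.Ioi (0:ℝ)) :=
      (base.const_mul M).mul_const C
    refine base'.congr_fun (fun x hx => ?_) measurableSet_Ioi
    beta_reduce; rw [Real.rpow_one]; ring
  -- continuity of τ ↦ T τ (u τ) on (0, ∞)
  have contA : ∀ u : ℝ → X, Continuous u →
      ContinuousOn (fun τ => T τ (u τ)) (Set.Ioi (0:ℝ)) := by
    intro u hu τ₀ hτ₀
    have hpos : (0:ℝ) < τ₀ := hτ₀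
    have h1 : Tendsto (fun τ => T τ (u τ₀)) (𝓝[Set.Ioi 0] τ₀) (𝓝 (T τ₀ (u τ₀))) :=
      hTcont (u τ₀) τ₀ hτ₀
    have hcb : Tendsto (fun τ : ℝ => M * τ ^ (-β) * Real.exp (-(δ/2) * τ) * ‖u τ - u τ₀‖)
        (𝓝[Set.Ioi 0] τ₀) (𝓝 0) := by
      have hr : ContinuousAt (fun τ : ℝ => τ ^ (-β)) τ₀ :=
        Real.continuousAt_rpow_const τ₀ (-β) (Or.inl (ne_of_gt hpos))
      have h2 : Tendsto (fun τ : ℝ => M * τ ^ (-β) * Real.exp (-(δ/2) * τ) * ‖u τ - u τ₀‖)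
          (𝓝 τ₀) (𝓝 (M * τ₀ ^ (-β) * Real.exp (-(δ/2) * τ₀) * ‖u τ₀ - u τ₀‖)) := by
        apply Tendsto.mul
        · exact (continuousAt_const.mul hr).mul
            ((Real.continuous_exp.comp (continuous_const.mul continuous_id)).continuousAt)
        · exact ((hu.sub continuous_const).norm).continuousAt
      simpa using h2.mono_left nhdsWithin_le_nhds
    have h2 : Tendsto (fun τ => T τ (u τ - u τ₀)) (𝓝[Set.Ioi 0] τ₀) (𝓝 0) := by
      apply squeeze_zero_norm' ?_ hcb
      filter_upwards [self_mem_nhdsWithin] with τ hτ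
      exact hTnorm τ hτ _
    have h3 := h1.add h2
    rw [add_zero] at h3
    have heq : ∀ τ, T τ (u τ₀) + T τ (u τ - u τ₀) = T τ (u τ) := by
      intro τ; rw [← map_add]; congr 1; abel
    exact Tendsto.congr heq h3
  -- core measurability
  have hAESM : ∀ c : ℝ, AEStronglyMeasurable (fun τ => T τ (h (c - τ)))
      (volume.restrict (Set.Ioi (0:ℝ))) := fun c =>
    (contA (fun τ => h (c - τ))
      (hh.1.comp (continuous_const.sub continuous_id))).aestronglyMeasurable measurableSet_Ioi
  -- change of variables
  have keyE : ∀ t : ℝ, (∫ s in Set.Iic t, T (t - s) (h s)) =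
      ∫ τ in Set.Ioi (0:ℝ), T τ (h (t - τ)) := by
    intro t
    have mp : MeasurePreserving (fun x : ℝ => t - x) volume volume :=
      Measure.measurePreserving_sub_left volume t
    have emb : MeasurableEmbedding (fun x : ℝ => t - x) :=
      (MeasurableEquiv.subLeft t).measurableEmbedding
    have him : (fun x : ℝ => t - x) ⁻¹' (Set.Iic t) = Set.Ici 0 := by
      ext x; simp
    have key := mp.setIntegral_preimage_emb emb (fun s => T (t - s) (h s)) (Set.Iic t)
    rw [him] at key
    simp only [sub_sub_cancel] at key
    rw [← key]
    exact integral_Ici_eq_integral_Ioi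
  -- a.e. bound
  have hbound : ∀ (v : ℝ → X), (∀ u, ‖v u‖ ≤ C) → ∀ c : ℝ,
      ∀ᵐ τ ∂(volume.restrict (Set.Ioi (0:ℝ))), ‖T τ (v (c - τ))‖ ≤ φ τ := by
    intro v hv c
    filter_upwards [ae_restrict_mem measurableSet_Ioi] with τ hτ
    have hτ' : (0:ℝ) < τ := hτ
    calc ‖T τ (v (c - τ))‖ ≤ M * τ ^ (-β) * Real.exp (-(δ/2) * τ) * ‖v (c - τ)‖ :=
          hTnorm τ hτ' _
      _ ≤ φ τ := by
          apply mul_le_mul_of_nonneg_left (hv _)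
          positivity
  constructor
  · -- continuity
    have cont : Continuous (fun t => ∫ τ in Set.Ioi (0:ℝ), T τ (h (t - τ))) := by
      apply continuous_of_dominated (bound := φ)
      · intro t; exact hAESM t
      · intro t; exact hbound h hC t
      · exact hφint
      · filter_upwards [] with τ
        exact (T τ).continuous.comp (hh.1.comp (continuous_id.sub continuous_const))
    have : (fun t => ∫ s in Set.Iic t, T (t - s) (h s)) =
        fun t => ∫ τ in Set.Ioi (0:ℝ), T τ (h (t - τ)) := funext keyE
    rw [this]; exact cont
  · intro s'
    obtain ⟨k, g, hk, hg1, hg2⟩ := hh.2 s'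
    have hgC : ∀ u, ‖g u‖ ≤ C := fun u =>
      le_of_tendsto (hg1 u).norm (Eventually.of_forall fun n => hC _)
    refine ⟨k, fun t => ∫ τ in Set.Ioi (0:ℝ), T τ (g (t - τ)), hk, ?_, ?_⟩
    · intro t
      simp only [keyE]
      apply tendsto_integral_of_dominated_convergence φ
      · intro n; exact hAESM (t + s' (k n))
      · exact hφint
      · intro n; exact hbound h hC (t + s' (k n))
      · filter_upwards [] with τ
        have h4 := ((T τ).continuous.tendsto (g (t - τ))).comp (hg1 (t - τ))
        simpa only [Function.comp_def, sub_add_eq_add_sub] using h4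
    · intro t
      simp only [keyE]
      apply tendsto_integral_of_dominated_convergence φ
      · intro n
        apply aestronglyMeasurable_of_tendsto_ae atTop
          (fun m => hAESM (t - s' (k n) + s' (k m)))
        filter_upwards [] with τ
        have h4 := ((T τ).continuous.tendsto (g (t - s' (k n) - τ))).comp
          (hg1 (t - s' (k n) - τ))
        simpa only [Function.comp_def, sub_add_eq_add_sub] using h4
      · exact hφint
      · intro n; exact hbound g hgC (t - s' (k n))
      · filter_upwards [] with τ
        have h4 := ((T τ).continuous.tendsto (h (t - τ))).comp (hg2 (t - τ))
        simpa only [Function.comp_def, sub_right_comm] using h4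
end

section
/- If h ∈ PAP₀(X), then the function Rh defined by (Rh)(t) := ∫_{−∞}^{t} T(t−s) h(s) ds belongs to PAP₀(Y). -/
open Filter Topology MeasureTheory

/-- The ergodic space `PAP₀(Z)`: bounded continuous functions whose mean
`(1/(2r)) ∫_{-r}^r ‖φ(s)‖ ds` tends to `0` as `r → ∞`. -/
def PAPZero {Z : Type*} [NormedAddCommGroup Z] (f : ℝ → Z) : Prop :=
  Continuous f ∧ (∃ C : ℝ, ∀ t : ℝ, ‖f t‖ ≤ C) ∧
    Tendsto (fun r : ℝ => (1 / (2 * r)) * ∫ s in (-r)..r, ‖f s‖) atTop (𝓝 0)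

/-- Substituting `τ = t - s` in an integral over `Iic t`. -/
lemma sub_subst_aux {E : Type*} [NormedAddCommGroup E] [NormedSpace ℝ E]
    (t : ℝ) (G : ℝ → E) :
    ∫ s in Set.Iic t, G (t - s) = ∫ τ in Set.Ioi (0 : ℝ), G τ := by
  have hemb : MeasurableEmbedding (fun s : ℝ => t - s) :=
    (MeasurableEquiv.subLeft t).measurableEmbedding
  have key := (Measure.measurePreserving_sub_left volume t).setIntegral_preimage_emb
    hemb G (Set.Ioi 0)
  have hpre : (fun s : ℝ => t - s) ⁻¹' Set.Ioi 0 = Set.Iio t := by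
    ext s; simp [sub_pos]
  rw [hpre] at key
  exact (setIntegral_congr_set Iio_ae_eq_Iic).symm.trans key

/-- Joint continuity of `(τ, x) ↦ T τ x` on `Ioi 0 ×ˢ univ` from strong continuity and a
locally uniform bound. -/
lemma joint_cont_aux {X Y : Type*} [NormedAddCommGroup X] [NormedSpace ℂ X]
    [NormedAddCommGroup Y] [NormedSpace ℂ Y]
    (g : ℝ → ℝ) (T : ℝ → X →L[ℂ] Y)
    (hTcont : ∀ x : X, ContinuousOn (fun τ => T τ x) (Set.Ioi (0 : ℝ)))
    (hg_anti : ∀ ⦃a τ : ℝ⦄, 0 < a → a ≤ τ → g τ ≤ g a)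
    (hT : ∀ τ > (0 : ℝ), ∀ x : X, ‖T τ x‖ ≤ g τ * ‖x‖) :
    ContinuousOn (fun p : ℝ × X => T p.1 p.2) (Set.Ioi (0 : ℝ) ×ˢ Set.univ) := by
  rintro ⟨τ₀, x₀⟩ ⟨hτ₀, -⟩
  have hτ₀ : (0 : ℝ) < τ₀ := hτ₀
  have h1 : ContinuousWithinAt (fun p : ℝ × X => T p.1 x₀)
      (Set.Ioi (0 : ℝ) ×ˢ Set.univ) (τ₀, x₀) :=
    (hTcont x₀ τ₀ hτ₀).comp (f := Prod.fst) (x := (τ₀, x₀)) continuousWithinAt_fst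
      fun p (hp : p ∈ Set.Ioi (0 : ℝ) ×ˢ (Set.univ : Set X)) => hp.1
  have h2 : Tendsto (fun p : ℝ × X => T p.1 (p.2 - x₀))
      (𝓝[Set.Ioi (0 : ℝ) ×ˢ Set.univ] (τ₀, x₀)) (𝓝 0) := by
    rw [tendsto_zero_iff_norm_tendsto_zero]
    have hev : ∀ᶠ p : ℝ × X in 𝓝[Set.Ioi (0 : ℝ) ×ˢ Set.univ] (τ₀, x₀),
        ‖T p.1 (p.2 - x₀)‖ ≤ g (τ₀ / 2) * ‖p.2 - x₀‖ := by
      have hhalf : ∀ᶠ p : ℝ × X in 𝓝 (τ₀, x₀), τ₀ / 2 < p.1 :=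
        (continuous_fst.tendsto _).eventually (eventually_gt_nhds (half_lt_self hτ₀))
      filter_upwards [hhalf.filter_mono nhdsWithin_le_nhds] with p hp
      calc ‖T p.1 (p.2 - x₀)‖ ≤ g p.1 * ‖p.2 - x₀‖ := hT p.1 ((half_pos hτ₀).trans hp) _
        _ ≤ g (τ₀ / 2) * ‖p.2 - x₀‖ :=
          mul_le_mul_of_nonneg_right (hg_anti (half_pos hτ₀) hp.le) (norm_nonneg _)
    have hlim : Tendsto (fun p : ℝ × X => g (τ₀ / 2) * ‖p.2 - x₀‖)
        (𝓝[Set.Ioi (0 : ℝ) ×ˢ Set.univ] (τ₀, x₀)) (𝓝 0) := by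
      have hcont : Continuous fun p : ℝ × X => g (τ₀ / 2) * ‖p.2 - x₀‖ := by fun_prop
      have h3 : ContinuousWithinAt (fun p : ℝ × X => g (τ₀ / 2) * ‖p.2 - x₀‖)
          (Set.Ioi (0 : ℝ) ×ˢ Set.univ) (τ₀, x₀) := hcont.continuousWithinAt
      have h4 : Tendsto (fun p : ℝ × X => g (τ₀ / 2) * ‖p.2 - x₀‖)
          (𝓝[Set.Ioi (0 : ℝ) ×ˢ Set.univ] (τ₀, x₀)) (𝓝 (g (τ₀ / 2) * ‖x₀ - x₀‖)) := h3
      simpa using h4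
    exact squeeze_zero' (Eventually.of_forall fun p => norm_nonneg _) hev hlim
  have hsum := h2.add h1
  simp only [zero_add] at hsum
  have heq : (fun p : ℝ × X => T p.1 (p.2 - x₀) + T p.1 x₀)
      = fun p : ℝ × X => T p.1 p.2 := by
    funext p; simp [map_sub]
  rw [ContinuousWithinAt]
  rw [heq] at hsum
  exact hsum

/-- If `h ∈ PAP₀(X)`, then `(Rh)(t) = ∫_{-∞}^t T(t-s) h(s) ds` belongs to `PAP₀(Y)`. -/
theorem convolution_PAPZero {X Y : Type*}
    [NormedAddCommGroup X] [NormedSpace ℂ X] [CompleteSpace X]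
    [NormedAddCommGroup Y] [NormedSpace ℂ Y] [CompleteSpace Y]
    (β M δ : ℝ) (hβ : β ∈ Set.Ioo (0 : ℝ) 1) (hM : 0 < M) (hδ : 0 < δ)
    (T : ℝ → X →L[ℂ] Y)
    (hTcont : ∀ x : X, ContinuousOn (fun τ => T τ x) (Set.Ioi (0 : ℝ)))
    (hTnorm : ∀ τ > (0 : ℝ), ∀ x : X,
      ‖T τ x‖ ≤ M * τ ^ (-β) * Real.exp (-(δ / 2) * τ) * ‖x‖)
    (h : ℝ → X) (hh : PAPZero h) :
    PAPZero (fun t => ∫ s in Set.Iic t, T (t - s) (h s)) := by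
  obtain ⟨hβ0, hβ1⟩ := hβ
  obtain ⟨hhc, ⟨C, hC⟩, hhm⟩ := hh
  have hC0 : 0 ≤ C := (norm_nonneg _).trans (hC 0)
  set g : ℝ → ℝ := fun τ => M * τ ^ (-β) * Real.exp (-(δ / 2) * τ) with hg_def
  have hg_nonneg : ∀ τ : ℝ, 0 < τ → 0 ≤ g τ := fun τ hτ =>
    mul_nonneg (mul_nonneg hM.le (Real.rpow_nonneg hτ.le _)) (Real.exp_pos _).le
  have hg_meas : Measurable g := by fun_prop
  have hg_int : IntegrableOn g (Set.Ioi 0) := by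
    have h1 := integrableOn_rpow_mul_exp_neg_mul_rpow (p := 1) (s := -β) (b := δ / 2)
      (by linarith : (-1 : ℝ) < -β) zero_lt_one (by linarith)
    simp only [Real.rpow_one] at h1
    have h2 := h1.const_mul M
    have hge : g = fun x : ℝ => M * (x ^ (-β) * Real.exp (-(δ / 2) * x)) := by
      funext x; rw [hg_def]; ring
    rw [IntegrableOn, hge]
    exact h2
  have hg_anti : ∀ ⦃a τ : ℝ⦄, 0 < a → a ≤ τ → g τ ≤ g a := by
    intro a τ ha haτ
    have h1 : τ ^ (-β) ≤ a ^ (-β) :=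
      Real.rpow_le_rpow_of_nonpos ha haτ (by linarith)
    have h2 : Real.exp (-(δ / 2) * τ) ≤ Real.exp (-(δ / 2) * a) :=
      Real.exp_le_exp.2 (by nlinarith)
    calc g τ = M * τ ^ (-β) * Real.exp (-(δ / 2) * τ) := rfl
      _ ≤ M * a ^ (-β) * Real.exp (-(δ / 2) * τ) :=
        mul_le_mul_of_nonneg_right (mul_le_mul_of_nonneg_left h1 hM.le) (Real.exp_pos _).le
      _ ≤ M * a ^ (-β) * Real.exp (-(δ / 2) * a) :=
        mul_le_mul_of_nonneg_left h2 (mul_nonneg hM.le (Real.rpow_nonneg ha.le _))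
  have hTb : ∀ τ > (0 : ℝ), ∀ x : X, ‖T τ x‖ ≤ g τ * ‖x‖ := fun τ hτ x => hTnorm τ hτ x
  have hjoint : ContinuousOn (fun p : ℝ × X => T p.1 p.2) (Set.Ioi (0 : ℝ) ×ˢ Set.univ) :=
    joint_cont_aux g T hTcont hg_anti hTb
  have hmeasF : ∀ t : ℝ, AEStronglyMeasurable (fun τ => T τ (h (t - τ)))
      (volume.restrict (Set.Ioi 0)) := by
    intro t
    have hc : ContinuousOn (fun τ => T τ (h (t - τ))) (Set.Ioi 0) := by
      have hmap : Set.MapsTo (fun τ : ℝ => (τ, h (t - τ)))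
          (Set.Ioi 0) (Set.Ioi (0 : ℝ) ×ˢ Set.univ) := fun τ hτ => ⟨hτ, trivial⟩
      exact hjoint.comp
        ((continuous_id.prodMk (hhc.comp (continuous_const.sub continuous_id))).continuousOn)
        hmap
    exact hc.aestronglyMeasurable measurableSet_Ioi
  have hb_int : IntegrableOn (fun τ => g τ * C) (Set.Ioi 0) := hg_int.mul_const C
  have hbound : ∀ t : ℝ, ∀ᵐ τ ∂(volume.restrict (Set.Ioi (0 : ℝ))),
      ‖T τ (h (t - τ))‖ ≤ g τ * C := by
    intro t
    refine ae_restrict_of_forall_mem measurableSet_Ioi fun τ hτ => ?_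
    calc ‖T τ (h (t - τ))‖ ≤ g τ * ‖h (t - τ)‖ := hTb τ hτ _
      _ ≤ g τ * C := mul_le_mul_of_nonneg_left (hC _) (hg_nonneg τ hτ)
  have hrep : ∀ t : ℝ, (∫ s in Set.Iic t, T (t - s) (h s))
      = ∫ τ in Set.Ioi (0 : ℝ), T τ (h (t - τ)) := by
    intro t
    have := sub_subst_aux t (fun τ => T τ (h (t - τ)))
    simpa [sub_sub_cancel] using this
  have hcont : Continuous (fun t : ℝ => ∫ s in Set.Iic t, T (t - s) (h s)) := by
    have hfe : (fun t : ℝ => ∫ s in Set.Iic t, T (t - s) (h s))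
        = fun t : ℝ => ∫ τ in Set.Ioi (0 : ℝ), T τ (h (t - τ)) := funext hrep
    rw [hfe]
    apply continuous_of_dominated hmeasF hbound hb_int
    refine ae_restrict_of_forall_mem measurableSet_Ioi fun τ hτ => ?_
    exact (T τ).continuous.comp (hhc.comp (continuous_id.sub continuous_const))
  have hbdd : ∀ t : ℝ, ‖∫ s in Set.Iic t, T (t - s) (h s)‖
      ≤ ∫ τ in Set.Ioi (0 : ℝ), g τ * C := by
    intro t
    rw [hrep t]
    exact norm_integral_le_of_norm_le hb_int (hbound t)
  refine ⟨hcont, ⟨_, hbdd⟩, ?_⟩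
  -- the ergodic mean
  have hΦint : ∀ t : ℝ, IntegrableOn (fun τ => g τ * ‖h (t - τ)‖) (Set.Ioi 0) := by
    intro t
    refine hb_int.mono' (hg_meas.aestronglyMeasurable.mul
      ((hhc.comp (continuous_const.sub continuous_id)).norm.aestronglyMeasurable)) ?_
    refine ae_restrict_of_forall_mem measurableSet_Ioi fun τ hτ => ?_
    rw [Real.norm_eq_abs, abs_of_nonneg (mul_nonneg (hg_nonneg τ hτ) (norm_nonneg _))]
    exact mul_le_mul_of_nonneg_left (hC _) (hg_nonneg τ hτ)
  have hRle : ∀ t : ℝ, ‖∫ s in Set.Iic t, T (t - s) (h s)‖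
      ≤ ∫ τ in Set.Ioi (0 : ℝ), g τ * ‖h (t - τ)‖ := by
    intro t
    rw [hrep t]
    exact norm_integral_le_of_norm_le (hΦint t)
      (ae_restrict_of_forall_mem measurableSet_Ioi fun τ hτ => hTb τ hτ _)
  have hFprod : ∀ r : ℝ, Integrable (fun p : ℝ × ℝ => g p.2 * ‖h (p.1 - p.2)‖)
      ((volume.restrict (Set.Ioc (-r) r)).prod (volume.restrict (Set.Ioi 0))) := by
    intro r
    have hone : Integrable (fun _ : ℝ => (1 : ℝ)) (volume.restrict (Set.Ioc (-r) r)) :=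
      integrableOn_const measure_Ioc_lt_top.ne
    have hbig := hone.mul_prod hb_int
    simp only [one_mul] at hbig
    refine hbig.mono' ?_ ?_
    · exact ((hg_meas.comp measurable_snd).mul
        ((hhc.comp (continuous_fst.sub continuous_snd)).norm.measurable)).aestronglyMeasurable
    · rw [Measure.prod_restrict]
      refine ae_restrict_of_forall_mem (measurableSet_Ioc.prod measurableSet_Ioi) ?_
      rintro ⟨t, τ⟩ ⟨-, hτ⟩
      rw [Real.norm_eq_abs, abs_of_nonneg (mul_nonneg (hg_nonneg τ hτ) (norm_nonneg _))]
      exact mul_le_mul_of_nonneg_left (hC _) (hg_nonneg τ hτ)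
  have hΦIoc : ∀ r : ℝ, IntegrableOn
      (fun t => ∫ τ in Set.Ioi (0 : ℝ), g τ * ‖h (t - τ)‖) (Set.Ioc (-r) r) := by
    intro r
    have := (hFprod r).integral_prod_left
    simpa [IntegrableOn] using this
  have hIJ : ∀ r : ℝ, 0 < r →
      (1 / (2 * r)) * ∫ t in Set.Ioc (-r) r, ∫ τ in Set.Ioi (0 : ℝ), g τ * ‖h (t - τ)‖
      = ∫ τ in Set.Ioi (0 : ℝ),
          (1 / (2 * r)) * ∫ t in Set.Ioc (-r) r, g τ * ‖h (t - τ)‖ := by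
    intro r hr
    have hswap : (∫ t in Set.Ioc (-r) r, ∫ τ in Set.Ioi (0 : ℝ), g τ * ‖h (t - τ)‖)
        = ∫ τ in Set.Ioi (0 : ℝ), ∫ t in Set.Ioc (-r) r, g τ * ‖h (t - τ)‖ :=
      integral_integral_swap (hFprod r)
    rw [hswap, ← integral_const_mul]
  -- pointwise limit for dominated convergence
  have hFlim : ∀ᵐ τ ∂(volume.restrict (Set.Ioi (0 : ℝ))),
      Tendsto (fun r : ℝ => (1 / (2 * r)) * ∫ t in Set.Ioc (-r) r, g τ * ‖h (t - τ)‖)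
        atTop (𝓝 0) := by
    refine ae_restrict_of_forall_mem measurableSet_Ioi fun τ hτ => ?_
    have hτ : (0 : ℝ) < τ := hτ
    have hmean : Tendsto (fun r : ℝ =>
        (1 / (2 * (r + τ))) * ∫ s in (-(r + τ))..(r + τ), ‖h s‖) atTop (𝓝 0) := by
      have hm := hhm.comp (tendsto_atTop_add_const_right atTop τ tendsto_id)
      simp only [Function.comp_def, id_eq] at hm
      exact hm
    have hratio : Tendsto (fun r : ℝ => (r + τ) / r) atTop (𝓝 1) := by
      have h1 : Tendsto (fun r : ℝ => 1 + τ * r⁻¹) atTop (𝓝 (1 + τ * 0)) :=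
        tendsto_const_nhds.add (tendsto_inv_atTop_zero.const_mul τ)
      rw [mul_zero, add_zero] at h1
      refine h1.congr' ?_
      filter_upwards [eventually_gt_atTop 0] with r hr
      field_simp
    have hub : Tendsto (fun r : ℝ => g τ * ((r + τ) / r *
        ((1 / (2 * (r + τ))) * ∫ s in (-(r + τ))..(r + τ), ‖h s‖))) atTop (𝓝 0) := by
      have := (hratio.mul hmean).const_mul (g τ)
      simpa using this
    refine squeeze_zero' ?_ ?_ hub
    · filter_upwards [eventually_gt_atTop 0] with r hr
      exact mul_nonneg (by positivity)
        (setIntegral_nonneg measurableSet_Ioc fun t _ =>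
          mul_nonneg (hg_nonneg τ hτ) (norm_nonneg _))
    · filter_upwards [eventually_gt_atTop 0] with r hr
      have hr0 : r ≠ 0 := ne_of_gt hr
      have hrτ : r + τ ≠ 0 := by positivity
      have hshift : (∫ t in Set.Ioc (-r) r, ‖h (t - τ)‖)
          = ∫ u in (-r - τ)..(r - τ), ‖h u‖ := by
        rw [← intervalIntegral.integral_of_le (by linarith : -r ≤ r)]
        exact intervalIntegral.integral_comp_sub_right (fun u => ‖h u‖) τ
      have hA : (∫ t in Set.Ioc (-r) r, ‖h (t - τ)‖)
          ≤ ∫ s in (-(r + τ))..(r + τ), ‖h s‖ := by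
        rw [hshift]
        refine intervalIntegral.integral_mono_interval (by linarith) (by linarith)
          (by linarith) (Eventually.of_forall fun u => norm_nonneg _)
          (hhc.norm.intervalIntegrable _ _)
      calc (1 / (2 * r)) * ∫ t in Set.Ioc (-r) r, g τ * ‖h (t - τ)‖
          = (1 / (2 * r)) * (g τ * ∫ t in Set.Ioc (-r) r, ‖h (t - τ)‖) := by
            rw [integral_const_mul]
        _ ≤ (1 / (2 * r)) * (g τ * ∫ s in (-(r + τ))..(r + τ), ‖h s‖) := by
            refine mul_le_mul_of_nonneg_left
              (mul_le_mul_of_nonneg_left hA (hg_nonneg τ hτ)) (by positivity)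
        _ = g τ * ((r + τ) / r *
              ((1 / (2 * (r + τ))) * ∫ s in (-(r + τ))..(r + τ), ‖h s‖)) := by
            field_simp
  -- measurability for dominated convergence
  have hFmeas : ∀ r : ℝ, AEStronglyMeasurable
      (fun τ => (1 / (2 * r)) * ∫ t in Set.Ioc (-r) r, g τ * ‖h (t - τ)‖)
      (volume.restrict (Set.Ioi 0)) := by
    intro r
    have := (hFprod r).integral_prod_right
    exact (this.aestronglyMeasurable).const_mul _
  -- uniform bound for dominated convergence
  have hFbound : ∀ᶠ r : ℝ in atTop, ∀ᵐ τ ∂(volume.restrict (Set.Ioi (0 : ℝ))),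
      ‖(1 / (2 * r)) * ∫ t in Set.Ioc (-r) r, g τ * ‖h (t - τ)‖‖ ≤ g τ * C := by
    filter_upwards [eventually_gt_atTop 0] with r hr
    refine ae_restrict_of_forall_mem measurableSet_Ioi fun τ hτ => ?_
    have hτ : (0 : ℝ) < τ := hτ
    have hint : IntegrableOn (fun t => g τ * ‖h (t - τ)‖) (Set.Ioc (-r) r) :=
      ((continuous_const.mul
        ((hhc.comp (continuous_id.sub continuous_const)).norm)).intervalIntegrable (-r) r).1
    have h0 : 0 ≤ ∫ t in Set.Ioc (-r) r, g τ * ‖h (t - τ)‖ :=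
      setIntegral_nonneg measurableSet_Ioc fun t _ =>
        mul_nonneg (hg_nonneg τ hτ) (norm_nonneg _)
    have hle : (∫ t in Set.Ioc (-r) r, g τ * ‖h (t - τ)‖) ≤ (g τ * C) * (2 * r) := by
      calc (∫ t in Set.Ioc (-r) r, g τ * ‖h (t - τ)‖)
          ≤ ∫ _t in Set.Ioc (-r) r, g τ * C :=
            setIntegral_mono_on hint (integrableOn_const measure_Ioc_lt_top.ne)
              measurableSet_Ioc fun t _ =>
                mul_le_mul_of_nonneg_left (hC _) (hg_nonneg τ hτ)
        _ = (volume (Set.Ioc (-r) r)).toReal * (g τ * C) := by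
            rw [setIntegral_const]; rfl
        _ ≤ (g τ * C) * (2 * r) := by
            rw [Real.volume_Ioc, ENNReal.toReal_ofReal (by linarith)]
            have : r - -r = 2 * r := by ring
            rw [this, mul_comm]
    rw [Real.norm_eq_abs, abs_of_nonneg (mul_nonneg (by positivity) h0)]
    calc (1 / (2 * r)) * ∫ t in Set.Ioc (-r) r, g τ * ‖h (t - τ)‖
        ≤ (1 / (2 * r)) * ((g τ * C) * (2 * r)) :=
          mul_le_mul_of_nonneg_left hle (by positivity)
      _ = g τ * C := by field_simp
  have hJ0 : Tendsto (fun r : ℝ =>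
      ∫ τ in Set.Ioi (0 : ℝ), (1 / (2 * r)) * ∫ t in Set.Ioc (-r) r, g τ * ‖h (t - τ)‖)
      atTop (𝓝 0) := by
    have := tendsto_integral_filter_of_dominated_convergence
      (μ := volume.restrict (Set.Ioi (0 : ℝ))) (f := fun _ : ℝ => (0 : ℝ))
      (fun τ => g τ * C) (Eventually.of_forall hFmeas) hFbound hb_int hFlim
    simpa using this
  -- final squeeze
  refine squeeze_zero' ?_ ?_ hJ0
  · filter_upwards [eventually_gt_atTop 0] with r hr
    exact mul_nonneg (by positivity)
      (intervalIntegral.integral_nonneg (by linarith) fun t _ => norm_nonneg _)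
  · filter_upwards [eventually_gt_atTop 0] with r hr
    rw [intervalIntegral.integral_of_le (by linarith : -r ≤ r), ← hIJ r hr]
    have hmono : (∫ t in Set.Ioc (-r) r, ‖∫ s in Set.Iic t, T (t - s) (h s)‖)
        ≤ ∫ t in Set.Ioc (-r) r, ∫ τ in Set.Ioi (0 : ℝ), g τ * ‖h (t - τ)‖ :=
      setIntegral_mono_on ((hcont.norm.intervalIntegrable (-r) r).1) (hΦIoc r)
        measurableSet_Ioc fun t _ => hRle t
    exact mul_le_mul_of_nonneg_left hmono (by positivity)
end

section
/- If φ ∈ PAP₀(Y), then the function 𝔅φ defined by (𝔅φ)(t) := ∫_{−∞}^{t} 𝒞(t−s) φ(s) ds belongs to PAP₀(X); that is, lim_{r→∞} (1/(2r)) ∫_{−r}^{r} ‖ ∫_{−∞}^{t} 𝒞(t−s) φ(s) ds ‖_X dt = 0. -/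
open Filter Topology MeasureTheory

lemma aux_meas_apply {X Y : Type*}
    [NormedAddCommGroup X] [NormedSpace ℂ X]
    [NormedAddCommGroup Y] [NormedSpace ℂ Y]
    (C : ℝ → Y →L[ℂ] X) {μ : Measure ℝ}
    (hmeas : ∀ y : Y, AEStronglyMeasurable (fun t => C t y) μ)
    {ψ : ℝ → Y} (hψ : StronglyMeasurable ψ) :
    AEStronglyMeasurable (fun u => C u (ψ u)) μ := by
  have hsimple : ∀ f : SimpleFunc ℝ Y, AEStronglyMeasurable (fun u => C u (f u)) μ := by
    intro f
    refine SimpleFunc.induction (fun c {s} hs => ?_) (fun f g _ hf hg => ?_) f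
    · have h : (fun u => C u ((SimpleFunc.piecewise s hs (SimpleFunc.const _ c)
          (SimpleFunc.const _ 0)) u)) = s.indicator (fun u => C u c) := by
        funext u
        by_cases hu : u ∈ s <;>
          simp [SimpleFunc.piecewise_apply, hu, Set.indicator_of_mem,
            Set.indicator_of_notMem]
      rw [h]
      exact (hmeas c).indicator hs
    · have h : (fun u => C u ((f + g) u)) = fun u => C u (f u) + C u (g u) := by
        funext u; simp
      rw [h]
      exact hf.add hg
  refine aestronglyMeasurable_of_tendsto_ae atTop (fun n => hsimple (hψ.approx n))
    (ae_of_all _ fun u => ?_)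
  exact ((C u).continuous.tendsto _).comp (hψ.tendsto_approx u)

/-- If `φ ∈ PAP₀(Y)`, then `(𝔅φ)(t) = ∫_{-∞}^t 𝒞(t-s) φ(s) ds` belongs to
`PAP₀(X)`. -/
theorem convolution_operator_PAPZero {X Y : Type*}
    [NormedAddCommGroup X] [NormedSpace ℂ X] [CompleteSpace X]
    [NormedAddCommGroup Y] [NormedSpace ℂ Y] [CompleteSpace Y]
    (C : ℝ → Y →L[ℂ] X)
    (hmeas : ∀ y : Y, AEStronglyMeasurable (fun t => C t y)
      (volume.restrict (Set.Ioi (0 : ℝ))))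
    (ρ : ℝ → ℝ) (hρint : IntegrableOn ρ (Set.Ioi (0 : ℝ)))
    (hρnonneg : ∀ t : ℝ, 0 ≤ ρ t)
    (hbound : ∀ t > (0 : ℝ), ∀ y : Y, ‖C t y‖ ≤ ρ t * ‖y‖)
    (φ : ℝ → Y) (hφ : PAPZero φ) :
    PAPZero (fun t => ∫ s in Set.Iic t, C (t - s) (φ s)) := by
  obtain ⟨hφc, ⟨M, hM⟩, hφerg⟩ := hφ
  have hM0 : (0:ℝ) ≤ M := le_trans (norm_nonneg _) (hM 0)
  set ν := volume.restrict (Set.Ioi (0:ℝ)) with hν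
  -- change of variables
  have hrew : ∀ t : ℝ, (∫ s in Set.Iic t, C (t - s) (φ s))
      = ∫ u in Set.Ioi (0:ℝ), C u (φ (t - u)) := by
    intro t
    have h1 : (∫ s in Set.Iic t, C (t - s) (φ s)) = ∫ s in Set.Iio t, C (t - s) (φ s) :=
      (setIntegral_congr_set Iio_ae_eq_Iic).symm
    have himg : (fun u : ℝ => t - u) '' Set.Ioi 0 = Set.Iio t := by
      rw [Set.image_const_sub_Ioi, sub_zero]
    have hmp : MeasurePreserving (fun u : ℝ => t - u) volume volume :=
      Measure.measurePreserving_sub_left volume t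
    have hemb : MeasurableEmbedding (fun u : ℝ => t - u) :=
      (Homeomorph.subLeft t).measurableEmbedding
    rw [h1, ← himg, hmp.setIntegral_image_emb hemb]
    simp
  set g : ℝ → X := fun t => ∫ u in Set.Ioi (0:ℝ), C u (φ (t - u)) with hg
  have hgen : (fun t => ∫ s in Set.Iic t, C (t - s) (φ s)) = g := funext hrew
  rw [hgen]
  have hmeasg : ∀ t : ℝ, AEStronglyMeasurable (fun u => C u (φ (t - u))) ν := fun t =>
    aux_meas_apply C hmeas ((hφc.comp (continuous_const.sub continuous_id)).stronglyMeasurable)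
  have hbd : ∀ t : ℝ, ∀ᵐ u ∂ν, ‖C u (φ (t - u))‖ ≤ ρ u * M := by
    intro t
    rw [hν, ae_restrict_iff' measurableSet_Ioi]
    refine ae_of_all _ fun u hu => (hbound u hu _).trans ?_
    exact mul_le_mul_of_nonneg_left (hM _) (hρnonneg u)
  have hρM : Integrable (fun u => ρ u * M) ν := hρint.mul_const M
  have hint : ∀ t : ℝ, Integrable (fun u => C u (φ (t - u))) ν := fun t =>
    Integrable.mono' hρM (hmeasg t) (hbd t)
  have hgcont : Continuous g := by
    refine continuous_of_dominated hmeasg hbd hρM (ae_of_all _ fun u => ?_)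
    exact (C u).continuous.comp (hφc.comp (continuous_id.sub continuous_const))
  refine ⟨hgcont, ⟨(∫ u in Set.Ioi (0:ℝ), ρ u) * M, fun t => ?_⟩, ?_⟩
  · calc ‖g t‖ ≤ ∫ u in Set.Ioi (0:ℝ), ‖C u (φ (t - u))‖ := norm_integral_le_integral_norm _
      _ ≤ ∫ u in Set.Ioi (0:ℝ), ρ u * M := integral_mono_ae (hint t).norm hρM (hbd t)
      _ = (∫ u in Set.Ioi (0:ℝ), ρ u) * M := integral_mul_const M ρ

  · -- ergodic part
    set f : ℝ → ℝ → ℝ := fun t u => ρ u * ‖φ (t - u)‖ with hf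
    have hfc : ∀ u : ℝ, Continuous fun t => ‖φ (t - u)‖ :=
      fun u => (hφc.comp (continuous_id.sub continuous_const)).norm
    have hintn : ∀ t : ℝ, Integrable (fun u => f t u) ν := by
      intro t
      refine Integrable.mono' hρM
        (hρint.aestronglyMeasurable.mul
          ((hφc.comp (continuous_const.sub continuous_id)).norm.aestronglyMeasurable))
        (ae_of_all _ fun u => ?_)
      rw [Real.norm_eq_abs, abs_of_nonneg (mul_nonneg (hρnonneg u) (norm_nonneg _))]
      exact mul_le_mul_of_nonneg_left (hM _) (hρnonneg u)
    have hptw : ∀ t : ℝ, ‖g t‖ ≤ ∫ u in Set.Ioi (0:ℝ), f t u := by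
      intro t
      refine (norm_integral_le_integral_norm _).trans
        (integral_mono_ae (hint t).norm (hintn t) ?_)
      exact (ae_restrict_iff' measurableSet_Ioi).mpr
        (ae_of_all _ fun u hu => hbound u hu _)
    have hprod : ∀ r : ℝ, Integrable (Function.uncurry f)
        ((volume.restrict (Set.Ioc (-r) r)).prod ν) := by
      intro r
      have h1 : Integrable (fun _ : ℝ => (1:ℝ)) (volume.restrict (Set.Ioc (-r) r)) :=
        integrableOn_const measure_Ioc_lt_top.ne
      refine Integrable.mono' (h1.mul_prod hρM) ?_ (ae_of_all _ fun p => ?_)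
      · exact (hρint.aestronglyMeasurable.comp_snd).mul
          ((hφc.comp (continuous_fst.sub continuous_snd)).norm.aestronglyMeasurable)
      · show ‖ρ p.2 * ‖φ (p.1 - p.2)‖‖ ≤ 1 * (ρ p.2 * M)
        rw [one_mul, Real.norm_eq_abs,
          abs_of_nonneg (mul_nonneg (hρnonneg p.2) (norm_nonneg _))]
        exact mul_le_mul_of_nonneg_left (hM _) (hρnonneg p.2)
    have hkey : ∀ r : ℝ, 0 < r →
        (1 / (2*r)) * (∫ s in (-r)..r, ‖g s‖)
          ≤ ∫ u in Set.Ioi (0:ℝ), (1/(2*r)) * ∫ t in Set.Ioc (-r) r, f t u := by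
      intro r hr
      have hle : -r ≤ r := by linarith
      rw [intervalIntegral.integral_of_le hle]
      have h2r : (0:ℝ) ≤ 1/(2*r) := by positivity
      have hstep1 : (∫ t in Set.Ioc (-r) r, ‖g t‖)
          ≤ ∫ t in Set.Ioc (-r) r, ∫ u in Set.Ioi (0:ℝ), f t u :=
        integral_mono_ae hgcont.norm.integrableOn_Ioc
          ((hprod r).integral_prod_left) (ae_of_all _ hptw)
      have hswap : (∫ t in Set.Ioc (-r) r, ∫ u in Set.Ioi (0:ℝ), f t u)
          = ∫ u in Set.Ioi (0:ℝ), ∫ t in Set.Ioc (-r) r, f t u :=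
        integral_integral_swap (hprod r)
      calc (1/(2*r)) * ∫ t in Set.Ioc (-r) r, ‖g t‖
          ≤ (1/(2*r)) * ∫ t in Set.Ioc (-r) r, ∫ u in Set.Ioi (0:ℝ), f t u :=
            mul_le_mul_of_nonneg_left hstep1 h2r
        _ = ∫ u in Set.Ioi (0:ℝ), (1/(2*r)) * ∫ t in Set.Ioc (-r) r, f t u := by
            rw [hswap, integral_const_mul]
    have hmaj : Tendsto (fun r : ℝ => ∫ u in Set.Ioi (0:ℝ),
        (1/(2*r)) * ∫ t in Set.Ioc (-r) r, f t u) atTop (𝓝 0) := by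
      have h0 : Tendsto (fun r : ℝ => ∫ u in Set.Ioi (0:ℝ),
          (1/(2*r)) * ∫ t in Set.Ioc (-r) r, f t u) atTop
          (𝓝 (∫ _ in Set.Ioi (0:ℝ), (0:ℝ))) := by
        refine tendsto_integral_filter_of_dominated_convergence (fun u => ρ u * M)
          ?_ ?_ hρM ?_
        · filter_upwards [eventually_gt_atTop (0:ℝ)] with r hr
          exact ((hprod r).integral_prod_right.aestronglyMeasurable).const_mul _
        · filter_upwards [eventually_gt_atTop (0:ℝ)] with r hr
          refine (ae_restrict_iff' measurableSet_Ioi).mpr (ae_of_all _ fun u hu => ?_)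
          have hS0 : (0:ℝ) ≤ ∫ t in Set.Ioc (-r) r, f t u :=
            integral_nonneg fun t => mul_nonneg (hρnonneg u) (norm_nonneg _)
          have hS : (∫ t in Set.Ioc (-r) r, f t u) ≤ (2*r) * (ρ u * M) := by
            have h1 : (∫ t in Set.Ioc (-r) r, f t u)
                ≤ ∫ _ in Set.Ioc (-r) r, ρ u * M :=
              integral_mono_ae ((continuous_const.mul (hfc u)).integrableOn_Ioc)
                (integrableOn_const measure_Ioc_lt_top.ne)
                (ae_of_all _ fun t => mul_le_mul_of_nonneg_left (hM _) (hρnonneg u))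
            refine h1.trans ?_
            rw [setIntegral_const, Real.volume_real_Ioc_of_le (by linarith : -r ≤ r), smul_eq_mul]
            have : r - -r = 2*r := by ring
            rw [this]
          rw [Real.norm_eq_abs, abs_of_nonneg (mul_nonneg (by positivity) hS0)]
          calc (1/(2*r)) * ∫ t in Set.Ioc (-r) r, f t u
              ≤ (1/(2*r)) * ((2*r) * (ρ u * M)) :=
                mul_le_mul_of_nonneg_left hS (by positivity)
            _ = ρ u * M := by field_simp
        · refine (ae_restrict_iff' measurableSet_Ioi).mpr (ae_of_all _ fun u hu => ?_)
          simp only [Set.mem_Ioi] at hu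
          have hLu : Tendsto (fun r : ℝ =>
              (1/(2*(r+u))) * ∫ s in (-(r+u))..(r+u), ‖φ s‖) atTop (𝓝 0) :=
            hφerg.comp (tendsto_atTop_add_const_right atTop u tendsto_id)
          have hquot : Tendsto (fun r : ℝ => (r+u)/r) atTop (𝓝 1) := by
            have hdiv : Tendsto (fun r : ℝ => u / r) atTop (𝓝 0) :=
              tendsto_const_nhds.div_atTop tendsto_id
            have h1 : Tendsto (fun r : ℝ => 1 + u/r) atTop (𝓝 1) := by
              simpa using tendsto_const_nhds.add hdiv
            refine h1.congr' ?_
            filter_upwards [eventually_gt_atTop (0:ℝ)] with r hr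
            field_simp
          have hB : Tendsto (fun r : ℝ => ρ u * ((r+u)/r *
              ((1/(2*(r+u))) * ∫ s in (-(r+u))..(r+u), ‖φ s‖))) atTop (𝓝 0) := by
            have h2 := tendsto_const_nhds (x := ρ u) |>.mul (hquot.mul hLu)
            simpa using h2
          refine squeeze_zero' ?_ ?_ hB
          · filter_upwards [eventually_gt_atTop (0:ℝ)] with r hr
            exact mul_nonneg (by positivity)
              (integral_nonneg fun t => mul_nonneg (hρnonneg u) (norm_nonneg _))
          · filter_upwards [eventually_gt_atTop (0:ℝ)] with r hr
            have hle : -r ≤ r := by linarith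
            have hpull : (∫ t in Set.Ioc (-r) r, f t u)
                = ρ u * ∫ t in Set.Ioc (-r) r, ‖φ (t - u)‖ := integral_const_mul _ _
            have hconv : (∫ t in Set.Ioc (-r) r, ‖φ (t - u)‖)
                = ∫ s in (-r - u)..(r - u), ‖φ s‖ := by
              rw [← intervalIntegral.integral_of_le hle,
                intervalIntegral.integral_comp_sub_right (fun s => ‖φ s‖) u]
            have hmono : (∫ s in (-r - u)..(r - u), ‖φ s‖)
                ≤ ∫ s in (-(r+u))..(r+u), ‖φ s‖ :=
              intervalIntegral.integral_mono_interval (by linarith) (by linarith)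
                (by linarith) (ae_of_all _ fun s => norm_nonneg _)
                (hφc.norm.intervalIntegrable _ _)
            calc (1/(2*r)) * ∫ t in Set.Ioc (-r) r, f t u
                = ρ u * ((1/(2*r)) * ∫ t in Set.Ioc (-r) r, ‖φ (t-u)‖) := by
                  rw [hpull]; ring
              _ ≤ ρ u * ((1/(2*r)) * ∫ s in (-(r+u))..(r+u), ‖φ s‖) := by
                  refine mul_le_mul_of_nonneg_left
                    (mul_le_mul_of_nonneg_left ?_ (by positivity)) (hρnonneg u)
                  rw [hconv]; exact hmono
              _ = ρ u * ((r+u)/r * ((1/(2*(r+u))) * ∫ s in (-(r+u))..(r+u), ‖φ s‖)) := by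
                  have hru : r + u ≠ 0 := by positivity
                  have hr0 : r ≠ 0 := ne_of_gt hr
                  field_simp
      simpa using h0
    refine squeeze_zero' ?_ ?_ hmaj
    · filter_upwards [eventually_gt_atTop (0:ℝ)] with r hr
      exact mul_nonneg (by positivity)
        (intervalIntegral.integral_nonneg (by linarith) fun x _ => norm_nonneg _)
    · filter_upwards [eventually_gt_atTop (0:ℝ)] with r hr
      exact hkey r hr
end
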